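/- arXiv:2012.14009 — 6 statements merged into one kernel-verified Lean document; each statement's English description precedes it below -/
import Mathlib

section
/- Every digital interval ([a,b]_ℤ, c₁) has the approximate fixed point property: for every (c₁,c₁)-continuous f : [a,b]_ℤ → [a,b]_ℤ there exists x with |f(x) − x| ≤ 1. -/
lemma interval_AFPP_aux (a b : ℤ) (f : ℤ → ℤ)
    (hmap : ∀ x ∈ Set.Icc a b, f x ∈ Set.Icc a b)
    (hcont : ∀ x ∈ Set.Icc a b, ∀ y ∈ Set.Icc a b, |x - y| = 1 →
      f x = f y ∨ |f x - f y| = 1) :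
    ∀ n : ℕ, ∀ c, c ∈ Set.Icc a b → c ≤ f c → (b - c).toNat = n →
      ∃ x ∈ Set.Icc a b, |f x - x| ≤ 1 := by
  intro n
  induction n with
  | zero =>
    intro c hc hfc hn
    refine ⟨c, hc, ?_⟩
    have hcb : b ≤ c := by omega
    have := hmap c hc
    simp only [Set.mem_Icc] at this hc
    rw [abs_le]; omega
  | succ k ih =>
    intro c hc hfc hn
    by_cases h1 : f c ≤ c + 1
    · refine ⟨c, hc, ?_⟩
      rw [abs_le]; omega
    · have hc' : c + 1 ∈ Set.Icc a b := by
        have := hmap c hc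
        simp only [Set.mem_Icc] at this hc ⊢
        omega
      have hstep := hcont (c+1) hc' c hc (by simp)
      have hfc1 : c + 1 ≤ f (c+1) := by
        rcases hstep with h | h
        · omega
        · rw [abs_eq (by norm_num)] at h; omega
      exact ih (c+1) hc' hfc1 (by omega)

/-- Every digital interval ([a,b]_ℤ, c₁) has the AFPP. -/
theorem interval_AFPP (a b : ℤ) (hab : a ≤ b) (f : ℤ → ℤ)
    (hmap : ∀ x ∈ Set.Icc a b, f x ∈ Set.Icc a b)
    (hcont : ∀ x ∈ Set.Icc a b, ∀ y ∈ Set.Icc a b, |x - y| = 1 →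
      f x = f y ∨ |f x - f y| = 1) :
    ∃ x ∈ Set.Icc a b, |f x - x| ≤ 1 := by
  have ha : a ∈ Set.Icc a b := by simp [hab]
  have hfa : a ≤ f a := (hmap a ha).1
  exact interval_AFPP_aux a b f hmap hcont (b - a).toNat a ha hfa rfl
end

section
/- If a digital image (X,κ) has the approximate fixed point property and (Y,κ) is a κ-retract of (X,κ), then (Y,κ) has the approximate fixed point property. -/
/-- Pointwise (κ,κ)-continuity. -/
def DigCont {X : Type*} (κ : X → X → Prop) (f : X → X) : Prop :=
  ∀ x x', κ x x' → f x = f x' ∨ κ (f x) (f x')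

/-- The approximate fixed point property of (X,κ). -/
def AFPP {X : Type*} (κ : X → X → Prop) : Prop :=
  ∀ f : X → X, DigCont κ f → ∃ x, f x = x ∨ κ x (f x)

/-- If (X,κ) has the AFPP and Y is a κ-retract of X, then (Y,κ) has the AFPP. -/
theorem afpp_of_retract {X : Type*} (κ : X → X → Prop) (Y : Set X)
    (r : X → X) (hr : ∀ x, r x ∈ Y) (hfix : ∀ y ∈ Y, r y = y)
    (hrcont : DigCont κ r) (h : AFPP κ) :
    ∀ f : X → X, (∀ y ∈ Y, f y ∈ Y) →
      (∀ x ∈ Y, ∀ x' ∈ Y, κ x x' → f x = f x' ∨ κ (f x) (f x')) →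
      ∃ x ∈ Y, f x = x ∨ κ x (f x) := by
  intro f hmap hcont
  have hg : DigCont κ (fun x => f (r x)) := by
    intro x x' hxx'
    rcases hrcont x x' hxx' with he | ha
    · exact Or.inl (by simp only [he])
    · exact hcont (r x) (hr x) (r x') (hr x') ha
  obtain ⟨x, hx⟩ := h (fun x => f (r x)) hg
  rcases hx with he | ha
  · -- f (r x) = x, so x ∈ Y and r x = x
    have hxY : x ∈ Y := he ▸ hmap (r x) (hr x)
    exact ⟨x, hxY, Or.inl (by rw [hfix x hxY] at he; exact he)⟩
  · -- κ x (f (r x))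
    have hfY : f (r x) ∈ Y := hmap (r x) (hr x)
    rcases hrcont x (f (r x)) ha with he | ha'
    · refine ⟨r x, hr x, Or.inl ?_⟩
      rw [← hfix _ hfY, ← he]
    · refine ⟨r x, hr x, Or.inr ?_⟩
      rwa [hfix _ hfY] at ha'
end

section
/- A digital image with only one point has the fixed point property (every continuous self-map has a fixed point), and any κ-connected digital image with at least two points fails to have the fixed point property. -/
/-- The fixed point property of (X,κ). -/
def FPP {X : Type*} (κ : X → X → Prop) : Prop :=
  ∀ f : X → X, DigCont κ f → ∃ x, f x = x

/-- κ-connectivity of the whole image. -/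
def DigConn {X : Type*} (κ : X → X → Prop) : Prop :=
  ∀ a b : X, Relation.ReflTransGen κ a b

private lemma exists_adj {X : Type*} {κ : X → X → Prop} {a b : X}
    (h : Relation.ReflTransGen κ a b) (hne : a ≠ b) : ∃ u v : X, u ≠ v ∧ κ u v := by
  induction h with
  | refl => exact absurd rfl hne
  | tail hab hk ih =>
    rename_i c d
    by_cases hcd : c = d
    · subst hcd; exact ih hne
    · exact ⟨c, d, hcd, hk⟩

/-- A one-point digital image has the FPP, and any κ-connected digital image with
at least two points fails to have the FPP. -/
theorem fpp_singleton_and_not_fpp {X : Type*} (κ : X → X → Prop) (hsym : Symmetric κ) :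
    ((∃ p : X, ∀ x, x = p) → FPP κ) ∧
    ((DigConn κ ∧ ∃ a b : X, a ≠ b) → ¬ FPP κ) := by
  constructor
  · rintro ⟨p, hp⟩ f _
    exact ⟨p, by rw [hp (f p)]⟩
  · rintro ⟨hconn, a, b, hab⟩ hfpp
    classical
    obtain ⟨u, v, huv, hk⟩ := exists_adj (hconn a b) hab
    set f : X → X := fun x => if x = u then v else u with hf
    obtain ⟨x, hx⟩ := hfpp f (by
      intro x x' _
      by_cases h1 : x = u <;> by_cases h2 : x' = u <;>
        simp [hf, h1, h2, hk, hsym hk])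
    by_cases h : x = u
    · subst h; simp [hf] at hx; exact huv hx.symm
    · simp [hf, h] at hx; exact h hx.symm
end

section
/- If (X', c₁) ⊆ ℤ has the AFPP (with 2-adjacency) and [a,b]_ℤ is a digital interval, then (X' × [a,b]_ℤ, c₂) has the AFPP, where c₂-adjacency in ℤ² means the points are distinct and differ by at most 1 in each coordinate. -/
/-- c₁-adjacency on ℤ. -/
def c1AdjZ (x y : ℤ) : Prop := |x - y| = 1

/-- c₂ (8-)adjacency on ℤ²: distinct with ℓ∞ distance ≤ 1. -/
def c2Adj (p q : ℤ × ℤ) : Prop := p ≠ q ∧ |p.1 - q.1| ≤ 1 ∧ |p.2 - q.2| ≤ 1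

/-- (X, c₁) ⊆ ℤ has the approximate fixed point property. -/
def AFPPOnZ (X : Set ℤ) : Prop :=
  ∀ f : ℤ → ℤ, (∀ x ∈ X, f x ∈ X) →
    (∀ x ∈ X, ∀ y ∈ X, c1AdjZ x y → f x = f y ∨ c1AdjZ (f x) (f y)) →
    ∃ x ∈ X, f x = x ∨ c1AdjZ x (f x)

/-- (X, c₂) ⊆ ℤ² has the approximate fixed point property. -/
def AFPPOn (X : Set (ℤ × ℤ)) : Prop :=
  ∀ f : ℤ × ℤ → ℤ × ℤ, (∀ p ∈ X, f p ∈ X) →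
    (∀ p ∈ X, ∀ q ∈ X, c2Adj p q → f p = f q ∨ c2Adj (f p) (f q)) →
    ∃ p ∈ X, f p = p ∨ c2Adj p (f p)

/-- If (X', c₁) has the AFPP, then (X' × [a,b]_ℤ, c₂) has the AFPP. -/
theorem afpp_prod_interval (X' : Set ℤ) (h : AFPPOnZ X') (a b : ℤ) (hab : a ≤ b) :
    AFPPOn (X' ×ˢ Set.Icc a b) := by
  classical
  intro f hmap hcont
  set X : Set (ℤ × ℤ) := X' ×ˢ Set.Icc a b with hX
  have hmemX : ∀ x y : ℤ, x ∈ X' → a ≤ y → y ≤ b → (x, y) ∈ X := by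
    intro x y hx hy1 hy2
    exact Set.mem_prod.mpr ⟨hx, Set.mem_Icc.mpr ⟨hy1, hy2⟩⟩
  -- ℓ∞-Lipschitz-1 for distance-≤-1 pairs
  have lip : ∀ p ∈ X, ∀ q ∈ X, |p.1 - q.1| ≤ 1 → |p.2 - q.2| ≤ 1 →
      |(f p).1 - (f q).1| ≤ 1 ∧ |(f p).2 - (f q).2| ≤ 1 := by
    intro p hp q hq h1 h2
    by_cases hpq : p = q
    · subst hpq; simp
    · rcases hcont p hp q hq ⟨hpq, h1, h2⟩ with heq | hadj
      · rw [heq]; simp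
      · exact ⟨hadj.2.1, hadj.2.2⟩
  -- range facts for f
  have hf1 : ∀ p ∈ X, (f p).1 ∈ X' := fun p hp => (Set.mem_prod.mp (hmap p hp)).1
  have hf2a : ∀ p ∈ X, a ≤ (f p).2 := fun p hp =>
    (Set.mem_Icc.mp (Set.mem_prod.mp (hmap p hp)).2).1
  have hf2b : ∀ p ∈ X, (f p).2 ≤ b := fun p hp =>
    (Set.mem_Icc.mp (Set.mem_prod.mp (hmap p hp)).2).2
  -- least good second coordinate
  have hexists : ∀ x ∈ X', ∃ y : ℤ,
      (a ≤ y ∧ y ≤ b ∧ (f (x, y)).2 ≤ y + 1) ∧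
      ∀ z : ℤ, (a ≤ z ∧ z ≤ b ∧ (f (x, z)).2 ≤ z + 1) → y ≤ z := by
    intro x hx
    have hinh : ∃ z : ℤ, a ≤ z ∧ z ≤ b ∧ (f (x, z)).2 ≤ z + 1 := by
      refine ⟨b, hab, le_refl b, ?_⟩
      have := hf2b (x, b) (hmemX x b hx hab (le_refl b))
      omega
    have hbdd : ∃ c : ℤ, ∀ z : ℤ, (a ≤ z ∧ z ≤ b ∧ (f (x, z)).2 ≤ z + 1) → c ≤ z :=
      ⟨a, fun z hz => hz.1⟩
    obtain ⟨lb, hlb1, hlb2⟩ := Int.exists_least_of_bdd hbdd hinh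
    exact ⟨lb, hlb1, hlb2⟩
  choose! Y hY1 hY2 using hexists
  have hYa : ∀ x ∈ X', a ≤ Y x := fun x hx => (hY1 x hx).1
  have hYb : ∀ x ∈ X', Y x ≤ b := fun x hx => (hY1 x hx).2.1
  have hYle : ∀ x ∈ X', (f (x, Y x)).2 ≤ Y x + 1 := fun x hx => (hY1 x hx).2.2
  have hPmem : ∀ x ∈ X', (x, Y x) ∈ X := fun x hx => hmemX x (Y x) hx (hYa x hx) (hYb x hx)
  -- minimality below Y x
  have hmin : ∀ x ∈ X', ∀ z : ℤ, a ≤ z → z < Y x → z + 2 ≤ (f (x, z)).2 := by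
    intro x hx z hz1 hz2
    by_contra hcon
    have hzb : z ≤ b := le_trans (le_of_lt hz2) (hYb x hx)
    have := hY2 x hx z ⟨hz1, hzb, by omega⟩
    omega
  -- |f₂(x, Y x) - Y x| ≤ 1
  have hYfix : ∀ x ∈ X', Y x - 1 ≤ (f (x, Y x)).2 := by
    intro x hx
    by_cases hya : Y x = a
    · have := hf2a (x, Y x) (hPmem x hx)
      omega
    · have hlt : a ≤ Y x - 1 := by have := hYa x hx; omega
      have h1 : (Y x - 1) + 2 ≤ (f (x, Y x - 1)).2 := hmin x hx (Y x - 1) hlt (by omega)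
      have hq : (x, Y x - 1) ∈ X := hmemX x (Y x - 1) hx hlt (by have := hYb x hx; omega)
      have := (lip (x, Y x) (hPmem x hx) (x, Y x - 1) hq (by simp) (by simp)).2
      rw [abs_le] at this
      omega
  -- Y is 1-Lipschitz across adjacent x's
  have hkey : ∀ x ∈ X', ∀ x' ∈ X', |x - x'| = 1 → Y x' ≤ Y x + 1 := by
    intro x hx x' hx' hadj
    by_contra hcon
    push_neg at hcon
    -- Y x' ≥ Y x + 2 ; look at z = Y x + 1
    have hz1 : a ≤ Y x + 1 := by have := hYa x hx; omega
    have hz2 : Y x + 1 < Y x' := by omega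
    have hbig : (Y x + 1) + 2 ≤ (f (x', Y x + 1)).2 := hmin x' hx' (Y x + 1) hz1 hz2
    have hq : (x', Y x + 1) ∈ X :=
      hmemX x' (Y x + 1) hx' hz1 (by have := hYb x' hx'; omega)
    have hlip := (lip (x, Y x) (hPmem x hx) (x', Y x + 1) hq (by simpa using hadj.le)
      (by simp)).2
    have hle := hYle x hx
    rw [abs_le] at hlip
    omega
  have hYlip : ∀ x ∈ X', ∀ x' ∈ X', |x - x'| = 1 → |Y x - Y x'| ≤ 1 := by
    intro x hx x' hx' hadj
    have h1 := hkey x hx x' hx' hadj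
    have h2 := hkey x' hx' x hx (by rw [abs_sub_comm]; exact hadj)
    rw [abs_le]; omega
  -- the induced map on X'
  set g : ℤ → ℤ := fun x => if hx : x ∈ X' then (f (x, Y x)).1 else x with hg
  have hgval : ∀ x ∈ X', g x = (f (x, Y x)).1 := by
    intro x hx; simp only [hg, dif_pos hx]
  have hgmap : ∀ x ∈ X', g x ∈ X' := by
    intro x hx; rw [hgval x hx]; exact hf1 _ (hPmem x hx)
  have hgcont : ∀ x ∈ X', ∀ x' ∈ X', c1AdjZ x x' → g x = g x' ∨ c1AdjZ (g x) (g x') := by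
    intro x hx x' hx' hadj
    have hadj' : |x - x'| = 1 := hadj
    have hylip := hYlip x hx x' hx' hadj'
    have hlip := (lip (x, Y x) (hPmem x hx) (x', Y x') (hPmem x' hx')
      (by simpa using le_of_eq hadj') (by simpa using hylip)).1
    rw [← hgval x hx, ← hgval x' hx'] at hlip
    by_cases heq : g x = g x'
    · exact Or.inl heq
    · right
      unfold c1AdjZ
      rw [abs_le] at hlip
      have : g x - g x' ≠ 0 := by omega
      have : g x - g x' = 1 ∨ g x - g x' = -1 := by omega
      rcases this with h' | h' <;> rw [h'] <;> simp
  obtain ⟨x, hx, hfix⟩ := h g hgmap hgcont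
  refine ⟨(x, Y x), hPmem x hx, ?_⟩
  by_cases hfp : f (x, Y x) = (x, Y x)
  · exact Or.inl hfp
  · right
    have h1 : |x - (f (x, Y x)).1| ≤ 1 := by
      rcases hfix with heq | hadj
      · rw [hgval x hx] at heq; rw [heq]; simp
      · unfold c1AdjZ at hadj; rw [hgval x hx] at hadj; exact hadj.le
    have h2 : |Y x - (f (x, Y x)).2| ≤ 1 := by
      have hu := hYle x hx
      have hl := hYfix x hx
      rw [abs_le]; omega
    exact ⟨fun heq => hfp heq.symm, h1, h2⟩
end

section
/- Every digital rectangle ([a,b]_ℤ × [c,d]_ℤ, c₂) has the approximate fixed point property: every (c₂,c₂)-continuous self-map f has a point p with max(|pr₁(f(p))−pr₁(p)|, |pr₂(f(p))−pr₂(p)|) ≤ 1. -/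
/-!
Induct on the size of the rectangle: a single point is trivial, and swapping coordinates reduces
adding a column to adding a row. To pass from `[a,b] × [c,d]` to `[a,b] × [c,d+1]`, truncate
the second coordinate of `f` at `d`. The truncated map is still continuous on `[a,b] × [c,d]`, so
it has an approximate fixed point `p`. Either `f p` already lies in the lower rectangle, or
`f p = (x, d+1)` and then `p` or its neighbour `(x, d)` is an approximate fixed point of `f`.
-/

open Set

/-- `p` and `q` are equal or c₂-adjacent. -/
def C2Near (p q : ℤ × ℤ) : Prop := |p.1 - q.1| ≤ 1 ∧ |p.2 - q.2| ≤ 1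

def C2ContinuousOn (f : ℤ × ℤ → ℤ × ℤ) (S : Set (ℤ × ℤ)) : Prop :=
  ∀ p ∈ S, ∀ q ∈ S, c2Adj p q → C2Near (f p) (f q)

/-- The approximate fixed point property of a digital image `(S, c₂)`. -/
def HasAFPP (S : Set (ℤ × ℤ)) : Prop :=
  ∀ f, MapsTo f S S → C2ContinuousOn f S → ∃ p ∈ S, C2Near (f p) p

theorem c2Near_iff_eq_or_c2Adj {p q : ℤ × ℤ} : C2Near p q ↔ p = q ∨ c2Adj p q := by
  refine ⟨fun h => or_iff_not_imp_left.2 fun hpq => ⟨hpq, h⟩, ?_⟩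
  rintro (rfl | h)
  · simp [C2Near]
  · exact h.2

theorem C2Near.symm {p q : ℤ × ℤ} (h : C2Near p q) : C2Near q p := by
  simpa only [C2Near, abs_sub_comm] using h

theorem C2Near.swap {p q : ℤ × ℤ} (h : C2Near p q) : C2Near p.swap q.swap := ⟨h.2, h.1⟩

theorem c2Adj.swap {p q : ℤ × ℤ} (h : c2Adj p q) : c2Adj p.swap q.swap :=
  ⟨Prod.swap_injective.ne h.1, h.2.2, h.2.1⟩

theorem C2ContinuousOn.mono {f : ℤ × ℤ → ℤ × ℤ} {S T : Set (ℤ × ℤ)} (hf : C2ContinuousOn f T)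
    (hST : S ⊆ T) : C2ContinuousOn f S :=
  fun p hp q hq hpq => hf p (hST hp) q (hST hq) hpq

theorem C2ContinuousOn.comp {g f : ℤ × ℤ → ℤ × ℤ} {S : Set (ℤ × ℤ)}
    (hg : ∀ p q, C2Near p q → C2Near (g p) (g q)) (hf : C2ContinuousOn f S) :
    C2ContinuousOn (g ∘ f) S :=
  fun p hp q hq hpq => hg _ _ (hf p hp q hq hpq)

theorem hasAFPP_singleton (x : ℤ × ℤ) : HasAFPP {x} := by
  intro f hf _
  refine ⟨x, rfl, ?_⟩
  rw [hf rfl]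
  simp [C2Near]

theorem HasAFPP.preimage_swap {S : Set (ℤ × ℤ)} (hS : HasAFPP S) : HasAFPP (Prod.swap ⁻¹' S) := by
  intro f hf hcont
  obtain ⟨p, hp, hfp⟩ := hS (Prod.swap ∘ f ∘ Prod.swap)
    (fun p hp => hf (show p.swap.swap ∈ S by simpa using hp))
    (fun p hp q hq hpq => (hcont p.swap (by simpa using hp) q.swap (by simpa using hq) hpq.swap).swap)
  exact ⟨p.swap, by simpa using hp, by simpa using hfp.swap⟩

def truncSnd (d : ℤ) (p : ℤ × ℤ) : ℤ × ℤ := (p.1, min p.2 d)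

theorem C2Near.truncSnd {p q : ℤ × ℤ} (h : C2Near p q) (d : ℤ) :
    C2Near (truncSnd d p) (truncSnd d q) := by
  obtain ⟨h1, h2⟩ := h
  refine ⟨h1, ?_⟩
  simp only [_root_.truncSnd, abs_le] at h2 ⊢
  omega

theorem mapsTo_truncSnd {a b c d : ℤ} (hcd : c ≤ d) :
    MapsTo (truncSnd d) (Icc a b ×ˢ Icc c (d + 1)) (Icc a b ×ˢ Icc c d) := by
  rintro p ⟨hp1, hp2, -⟩
  exact ⟨hp1, le_min hp2 hcd, min_le_right _ _⟩

theorem hasAFPP_Icc_prod_Icc_add_one {a b c d : ℤ} (hcd : c ≤ d)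
    (h : HasAFPP (Icc a b ×ˢ Icc c d)) : HasAFPP (Icc a b ×ˢ Icc c (d + 1)) := by
  intro f hf hcont
  have hsub : Icc a b ×ˢ Icc c d ⊆ Icc a b ×ˢ Icc c (d + 1) :=
    prod_mono le_rfl (Icc_subset_Icc_right (by omega))
  obtain ⟨p, hp, hgp⟩ := h (truncSnd d ∘ f) ((mapsTo_truncSnd hcd).comp (hf.mono_left hsub))
    ((hcont.mono hsub).comp fun _ _ hpq => hpq.truncSnd d)
  obtain ⟨-, -, hfp_le⟩ := hf (hsub hp)
  by_cases hfpd : (f p).2 ≤ d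
  · refine ⟨p, hsub hp, ?_⟩
    simpa [truncSnd, hfpd] using hgp
  have hfp2 : (f p).2 = d + 1 := by omega
  have htrunc : truncSnd d (f p) = ((f p).1, d) := by simp only [truncSnd]; congr 1; omega
  have hqp : C2Near ((f p).1, d) p := htrunc ▸ hgp
  have hqmem : ((f p).1, d) ∈ Icc a b ×ˢ Icc c (d + 1) :=
    htrunc ▸ hsub (mapsTo_truncSnd hcd (hf (hsub hp)))
  rcases eq_or_ne ((f p).1, d) p with hq | hq
  · obtain ⟨hp1, hp2⟩ := Prod.ext_iff.1 hq
    refine ⟨p, hsub hp, ?_⟩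
    simp only [C2Near, ← hp1, ← hp2, hfp2]
    norm_num
  · obtain ⟨h1, h2⟩ := hcont p (hsub hp) _ hqmem ⟨hq.symm, hqp.symm⟩
    obtain ⟨-, -, hfq⟩ := hf hqmem
    refine ⟨_, hqmem, by simpa only [abs_sub_comm] using h1, ?_⟩
    simp only [abs_le] at h2 ⊢
    omega

theorem hasAFPP_Icc_prod_Icc_of_le {a b c : ℤ} (h : HasAFPP (Icc a b ×ˢ Icc c c)) {d : ℤ}
    (hcd : c ≤ d) : HasAFPP (Icc a b ×ˢ Icc c d) := by
  induction d, hcd using Int.leInduction with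
  | base => exact h
  | succ d hcd ih => exact hasAFPP_Icc_prod_Icc_add_one hcd ih

theorem hasAFPP_Icc_prod_Icc {a b c d : ℤ} (hab : a ≤ b) (hcd : c ≤ d) :
    HasAFPP (Icc a b ×ˢ Icc c d) := by
  have hcol : HasAFPP (Icc a a ×ˢ Icc c d) :=
    hasAFPP_Icc_prod_Icc_of_le (by simpa only [Icc_self, singleton_prod_singleton] using hasAFPP_singleton (a, c)) hcd
  have hswap : HasAFPP (Icc c d ×ˢ Icc a b) :=
    hasAFPP_Icc_prod_Icc_of_le (by simpa only [preimage_swap_prod] using hcol.preimage_swap) hab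
  simpa only [preimage_swap_prod] using hswap.preimage_swap

/-- Every digital rectangle ([a,b]_ℤ × [c,d]_ℤ, c₂) has the AFPP. -/
theorem rectangle_AFPP (a b c d : ℤ) (hab : a ≤ b) (hcd : c ≤ d)
    (f : ℤ × ℤ → ℤ × ℤ)
    (hmap : ∀ p ∈ Set.Icc a b ×ˢ Set.Icc c d, f p ∈ Set.Icc a b ×ˢ Set.Icc c d)
    (hcont : ∀ p ∈ Set.Icc a b ×ˢ Set.Icc c d, ∀ q ∈ Set.Icc a b ×ˢ Set.Icc c d,
      c2Adj p q → f p = f q ∨ c2Adj (f p) (f q)) :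
    ∃ p ∈ Set.Icc a b ×ˢ Set.Icc c d,
      max |(f p).1 - p.1| |(f p).2 - p.2| ≤ 1 := by
  obtain ⟨p, hp, hfp⟩ := hasAFPP_Icc_prod_Icc hab hcd f hmap
    fun p hp q hq hpq => c2Near_iff_eq_or_c2Adj.2 (hcont p hp q hq hpq)
  exact ⟨p, hp, max_le_iff.2 hfp⟩
end

section
/- The digital cube ([a₁,b₁]_ℤ × ⋯ × [aₙ,bₙ]_ℤ, cₙ) has the approximate fixed point property: every cₙ-continuous self-map f has a point p with ‖f(p) − p‖_∞ ≤ 1. -/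
/-- cₙ-adjacency on ℤⁿ: distinct points with ℓ∞ distance ≤ 1. -/
def cnAdj {n : ℕ} (x y : Fin n → ℤ) : Prop := x ≠ y ∧ ∀ i, |x i - y i| ≤ 1

section AFPPaux

variable {n : ℕ}

/-- membership in the cube as a plain predicate -/
private def Qc (a b x : Fin n → ℤ) : Prop := ∀ i, a i ≤ x i ∧ x i ≤ b i

/-- a cₙ-continuous map on the cube is 1-Lipschitz for the ℓ∞ metric. -/
private lemma lipAux (a b : Fin n → ℤ) (f : (Fin n → ℤ) → (Fin n → ℤ))
    (hcont : ∀ x, Qc a b x → ∀ y, Qc a b y → cnAdj x y → f x = f y ∨ cnAdj (f x) (f y)) :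
    ∀ d : ℕ, ∀ x y, Qc a b x → Qc a b y → (∀ i, |x i - y i| ≤ (d : ℤ)) →
      ∀ i, |f x i - f y i| ≤ (d : ℤ) := by
  intro d
  induction d with
  | zero =>
    intro x y hx hy h i
    have hxy : x = y := funext fun j => by have := abs_le.mp (h j); omega
    subst hxy; simp
  | succ d ih =>
    intro x y hx hy h i
    by_cases hxy : x = y
    · subst hxy; simp; positivity
    · set x' : Fin n → ℤ := fun j =>
        if x j < y j then x j + 1 else if y j < x j then x j - 1 else x j with hx'def
      have hstep : ∀ j, |x' j - y j| ≤ (d : ℤ) := by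
        intro j
        have hj := abs_le.mp (h j)
        rw [abs_le]
        simp only [hx'def]
        split_ifs <;> push_cast <;> omega
      have hQ' : Qc a b x' := by
        intro j
        have h1 := hx j; have h2 := hy j
        simp only [hx'def]
        split_ifs <;> omega
      have hne : x ≠ x' := by
        obtain ⟨j, hj⟩ := Function.ne_iff.mp hxy
        intro hcontr
        have hcj := congrFun hcontr j
        simp only [hx'def] at hcj
        split_ifs at hcj <;> omega
      have hadj : cnAdj x x' := by
        refine ⟨hne, fun j => ?_⟩
        rw [abs_le]
        simp only [hx'def]
        split_ifs <;> omega
      have h1 : ∀ j, |f x j - f x' j| ≤ 1 := by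
        rcases hcont x hx x' hQ' hadj with heq | hadjf
        · intro j; rw [heq]; simp
        · exact hadjf.2
      have h2 := ih x' y hQ' hy hstep i
      have h3 := abs_sub_le (f x i) (f x' i) (f y i)
      have h4 := h1 i
      push_cast
      push_cast at h2
      linarith

private lemma descentAux (a b : Fin n → ℤ) (f : (Fin n → ℤ) → (Fin n → ℤ))
    (hcont : ∀ x, Qc a b x → ∀ y, Qc a b y → cnAdj x y → f x = f y ∨ cnAdj (f x) (f y)) :
    ∀ N : ℕ, ∀ lo hi : Fin n → ℤ,
      (∀ i, a i ≤ lo i) → (∀ i, lo i ≤ hi i) → (∀ i, hi i ≤ b i) →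
      (∀ x, (∀ i, lo i ≤ x i ∧ x i ≤ hi i) → (∀ i, lo i ≤ f x i ∧ f x i ≤ hi i)) →
      (∑ i, (hi i - lo i).toNat) ≤ N →
      ∃ x, Qc a b x ∧ ∀ i, |f x i - x i| ≤ 1 := by
  intro N
  induction N with
  | zero =>
    intro lo hi hal hlh hhb hinv hsum
    refine ⟨lo, fun i => ⟨hal i, le_trans (hlh i) (hhb i)⟩, fun i => ?_⟩
    have hz : (hi i - lo i).toNat = 0 :=
      Finset.sum_eq_zero_iff.mp (Nat.le_zero.mp hsum) i (Finset.mem_univ i)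
    have hfi := hinv lo (fun j => ⟨le_refl _, hlh j⟩) i
    have := hlh i
    rw [abs_le]; omega
  | succ N ih =>
    intro lo hi hal hlh hhb hinv hsum
    by_cases hN : (∑ i, (hi i - lo i).toNat) ≤ N
    · exact ih lo hi hal hlh hhb hinv hN
    -- from here on, the sum is exactly N+1
    have hQbox : ∀ x, (∀ i, lo i ≤ x i ∧ x i ≤ hi i) → Qc a b x := fun x hx i =>
      ⟨le_trans (hal i) (hx i).1, le_trans (hx i).2 (hhb i)⟩
    set B : Finset (Fin n → ℤ) := Finset.Icc lo hi with hBdef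
    have hmemB : ∀ x, x ∈ B ↔ (∀ i, lo i ≤ x i ∧ x i ≤ hi i) := by
      intro x
      rw [hBdef, Finset.mem_Icc]
      constructor
      · rintro ⟨h1, h2⟩ i; exact ⟨h1 i, h2 i⟩
      · intro h; exact ⟨fun i => (h i).1, fun i => (h i).2⟩
    have hBne : B.Nonempty := by
      rw [hBdef]
      exact Finset.nonempty_Icc.mpr (fun i => hlh i)
    have hImne : ∀ i : Fin n, (B.image fun x => f x i).Nonempty := fun i => hBne.image _
    set lo' : Fin n → ℤ := fun i => (B.image fun x => f x i).min' (hImne i) with hlo'def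
    set hi' : Fin n → ℤ := fun i => (B.image fun x => f x i).max' (hImne i) with hhi'def
    -- image bounds
    have hbnd : ∀ x, (∀ i, lo i ≤ x i ∧ x i ≤ hi i) → ∀ i, lo' i ≤ f x i ∧ f x i ≤ hi' i := by
      intro x hx i
      have hmem : f x i ∈ B.image fun x => f x i :=
        Finset.mem_image_of_mem _ ((hmemB x).mpr hx)
      exact ⟨Finset.min'_le _ _ hmem, Finset.le_max' _ _ hmem⟩
    have hlo'ge : ∀ i, lo i ≤ lo' i := by
      intro i
      apply Finset.le_min'
      intro y hy
      obtain ⟨z, hz, rfl⟩ := Finset.mem_image.mp hy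
      exact (hinv z ((hmemB z).mp hz) i).1
    have hhi'le : ∀ i, hi' i ≤ hi i := by
      intro i
      apply Finset.max'_le
      intro y hy
      obtain ⟨z, hz, rfl⟩ := Finset.mem_image.mp hy
      exact (hinv z ((hmemB z).mp hz) i).2
    have hlo'hi' : ∀ i, lo' i ≤ hi' i := by
      intro i
      have := hbnd lo (fun j => ⟨le_refl _, hlh j⟩) i
      omega
    have hinv' : ∀ x, (∀ i, lo' i ≤ x i ∧ x i ≤ hi' i) → ∀ i, lo' i ≤ f x i ∧ f x i ≤ hi' i := by
      intro x hx
      exact hbnd x (fun i => ⟨le_trans (hlo'ge i) (hx i).1, le_trans (hx i).2 (hhi'le i)⟩)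
    by_cases hs' : (∑ i, (hi' i - lo' i).toNat) ≤ N
    · exact ih lo' hi' (fun i => le_trans (hal i) (hlo'ge i)) hlo'hi'
        (fun i => le_trans (hhi'le i) (hhb i)) hinv' hs'
    -- hull of image equals the whole box
    have htermle : ∀ i ∈ Finset.univ, (hi' i - lo' i).toNat ≤ (hi i - lo i).toNat := by
      intro i _
      have := hlo'ge i; have := hhi'le i; have := hlo'hi' i
      omega
    have hsums : (∑ i, (hi' i - lo' i).toNat) = (∑ i, (hi i - lo i).toNat) := by
      have h1 : (∑ i, (hi' i - lo' i).toNat) ≤ (∑ i, (hi i - lo i).toNat) :=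
        Finset.sum_le_sum htermle
      omega
    have hterm : ∀ i, (hi' i - lo' i).toNat = (hi i - lo i).toNat := by
      intro i
      exact (Finset.sum_eq_sum_iff_of_le htermle).mp hsums i (Finset.mem_univ i)
    have hull : ∀ i, lo' i = lo i ∧ hi' i = hi i := by
      intro i
      have := hterm i
      have := hlo'ge i; have := hhi'le i; have := hlo'hi' i; have := hlh i
      omega
    by_cases hsmall : ∀ i, hi i - lo i ≤ 1
    · refine ⟨lo, fun i => ⟨hal i, le_trans (hlh i) (hhb i)⟩, fun i => ?_⟩
      have hfi := hinv lo (fun j => ⟨le_refl _, hlh j⟩) i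
      have := hsmall i
      rw [abs_le]; omega
    push_neg at hsmall
    obtain ⟨i₀, hi₀⟩ := hsmall
    -- d := max side length, d ≥ 2
    set d : ℤ := Finset.univ.sup' ⟨i₀, Finset.mem_univ i₀⟩ (fun i => hi i - lo i) with hddef
    have hdle : ∀ i, hi i - lo i ≤ d := fun i =>
      Finset.le_sup' (fun i => hi i - lo i) (Finset.mem_univ i)
    have hd2 : 2 ≤ d := le_trans (by omega) (hdle i₀)
    obtain ⟨j₀, _, hj₀⟩ := Finset.exists_mem_eq_sup' ⟨i₀, Finset.mem_univ i₀⟩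
      (fun i => hi i - lo i)
    -- Chebyshev-type shrink
    set loC : Fin n → ℤ := fun i => max (lo i) (hi i - (d - 1)) with hloCdef
    set hiC : Fin n → ℤ := fun i => min (hi i) (lo i + (d - 1)) with hhiCdef
    have hloChiC : ∀ i, loC i ≤ hiC i := by
      intro i
      have := hdle i; have := hlh i
      simp only [hloCdef, hhiCdef]
      omega
    have hlip := lipAux a b f hcont
    set e : ℕ := (d - 1).toNat with hedef
    have hecast : (e : ℤ) = d - 1 := Int.toNat_of_nonneg (by omega)
    have hinvC : ∀ x, (∀ i, loC i ≤ x i ∧ x i ≤ hiC i) → ∀ i, loC i ≤ f x i ∧ f x i ≤ hiC i := by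
      intro x hx i
      have hxbox : ∀ k, lo k ≤ x k ∧ x k ≤ hi k := by
        intro k
        have h1 := hx k; have h2 := hlh k
        simp only [hloCdef, hhiCdef, max_le_iff, le_min_iff, le_max_iff, min_le_iff] at h1
        omega
      have hfbox := hinv x hxbox i
      -- distance from x to any point of the box is ≤ d - 1
      have hdist : ∀ z : Fin n → ℤ, (∀ k, lo k ≤ z k ∧ z k ≤ hi k) → ∀ k, |x k - z k| ≤ (e : ℤ) := by
        intro z hz k
        have h1 := hx k; have h2 := hz k; have h3 := hdle k
        rw [abs_le, hecast]
        simp only [hloCdef, hhiCdef, le_max_iff, max_le_iff, le_min_iff, min_le_iff] at h1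
        rcases h1 with ⟨h1a, h1b⟩
        constructor <;> omega
      constructor
      · -- f x i ≥ hi i - (d-1) via a point attaining the max
        have hmax : hi' i ∈ B.image fun x => f x i := Finset.max'_mem _ _
        obtain ⟨z, hzB, hz⟩ : ∃ z ∈ B, f z i = hi' i := Finset.mem_image.mp hmax
        have hzbox := (hmemB z).mp hzB
        have hlipz := hlip e x z (hQbox x hxbox) (hQbox z hzbox) (hdist z hzbox) i
        rw [abs_le, hecast] at hlipz
        have : f z i = hi i := by rw [hz]; exact (hull i).2
        simp only [hloCdef]
        omega
      · -- f x i ≤ lo i + (d-1) via a point attaining the min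
        have hmin : lo' i ∈ B.image fun x => f x i := Finset.min'_mem _ _
        obtain ⟨w, hwB, hw⟩ : ∃ w ∈ B, f w i = lo' i := Finset.mem_image.mp hmin
        have hwbox := (hmemB w).mp hwB
        have hlipw := hlip e x w (hQbox x hxbox) (hQbox w hwbox) (hdist w hwbox) i
        rw [abs_le, hecast] at hlipw
        have : f w i = lo i := by rw [hw]; exact (hull i).1
        simp only [hhiCdef]
        omega
    -- the C box is strictly smaller
    have hCle : ∀ i ∈ Finset.univ, (hiC i - loC i).toNat ≤ (hi i - lo i).toNat := by
      intro i _
      have := hlh i; have := hloChiC i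
      simp only [hloCdef, hhiCdef]
      omega
    have hClt : (∑ i, (hiC i - loC i).toNat) < (∑ i, (hi i - lo i).toNat) := by
      apply Finset.sum_lt_sum hCle
      refine ⟨j₀, Finset.mem_univ j₀, ?_⟩
      have h1 : hi j₀ - lo j₀ = d := hj₀.symm
      have := hloChiC j₀
      simp only [hloCdef, hhiCdef] at this ⊢
      omega
    have hCN : (∑ i, (hiC i - loC i).toNat) ≤ N := by omega
    exact ih loC hiC
      (fun i => le_trans (hal i) (le_max_left _ _))
      hloChiC
      (fun i => le_trans (min_le_left _ _) (hhb i))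
      hinvC hCN

end AFPPaux

/-- The digital cube (∏ᵢ [aᵢ,bᵢ]_ℤ, cₙ) has the AFPP. -/
theorem cube_AFPP (n : ℕ) (a b : Fin n → ℤ) (hab : ∀ i, a i ≤ b i)
    (f : (Fin n → ℤ) → (Fin n → ℤ))
    (hmap : ∀ x ∈ {x : Fin n → ℤ | ∀ i, x i ∈ Set.Icc (a i) (b i)},
      f x ∈ {x : Fin n → ℤ | ∀ i, x i ∈ Set.Icc (a i) (b i)})
    (hcont : ∀ x ∈ {x : Fin n → ℤ | ∀ i, x i ∈ Set.Icc (a i) (b i)},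
      ∀ y ∈ {x : Fin n → ℤ | ∀ i, x i ∈ Set.Icc (a i) (b i)},
      cnAdj x y → f x = f y ∨ cnAdj (f x) (f y)) :
    ∃ x ∈ {x : Fin n → ℤ | ∀ i, x i ∈ Set.Icc (a i) (b i)},
      ∀ i, |f x i - x i| ≤ 1 := by
  have hQeq : ∀ x : Fin n → ℤ,
      (x ∈ {x : Fin n → ℤ | ∀ i, x i ∈ Set.Icc (a i) (b i)}) ↔ Qc a b x := by
    intro x
    simp only [Set.mem_setOf_eq, Set.mem_Icc, Qc]
  have hcont' : ∀ x, Qc a b x → ∀ y, Qc a b y →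
      cnAdj x y → f x = f y ∨ cnAdj (f x) (f y) := by
    intro x hx y hy
    exact hcont x ((hQeq x).mpr hx) y ((hQeq y).mpr hy)
  have hinv : ∀ x, (∀ i, a i ≤ x i ∧ x i ≤ b i) → ∀ i, a i ≤ f x i ∧ f x i ≤ b i := by
    intro x hx i
    have := hmap x ((hQeq x).mpr hx)
    rw [hQeq] at this
    exact this i
  obtain ⟨x, hx, hfx⟩ := descentAux a b f hcont' (∑ i, (b i - a i).toNat) a b
    (fun i => le_refl _) hab (fun i => le_refl _) hinv (le_refl _)
  exact ⟨x, (hQeq x).mpr hx, hfx⟩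
end
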